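/- Let A1 and A2 be the symmetrized barotropic Euler Jacobians with reference state v̄ = (v̄1, v̄2) ≠ 0 and sound speed ā > 0. If real numbers m̄1, m̄2 satisfy −1 + m̄1·v̄1 + m̄2·v̄2 = σ(|m̄1| + |m̄2|)·ā for some σ > 1, then the matrix A(m̄) = −Id + m̄1·A1 + m̄2·A2 is positive definite. -/

import Mathlib

/-!
All diagonal entries of `A(m̄)` equal `σ (|m̄₁| + |m̄₂|) ā`, while the off-diagonal absolute row
sums are at most `(|m̄₁| + |m̄₂|) ā`, which is smaller since `σ > 1` and `m̄ ≠ 0`. So `A(m̄)` is a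
strictly diagonally dominant symmetric matrix, and Gershgorin's circle theorem puts each of its
(real) eigenvalues in a disc lying in the open right half-plane.
-/

open Matrix Finset
open scoped ComplexOrder

namespace Matrix

variable {𝕜 n : Type*} [RCLike 𝕜] [Fintype n] [DecidableEq n] {A : Matrix n n 𝕜}

theorem IsHermitian.hasEigenvalue_eigenvalues (hA : A.IsHermitian) (i : n) :
    Module.End.HasEigenvalue (toLin' A) (hA.eigenvalues i : 𝕜) := by
  refine Module.End.hasEigenvalue_of_hasEigenvector (x := ⇑(hA.eigenvectorBasis i)) ⟨?_, ?_⟩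
  · rw [Module.End.mem_eigenspace_iff, toLin'_apply, hA.mulVec_eigenvectorBasis,
      RCLike.real_smul_eq_coe_smul (K := 𝕜)]
  · simpa using (hA.eigenvectorBasis.orthonormal.ne_zero i)

theorem IsHermitian.posDef_of_sum_row_lt_diag (hA : A.IsHermitian)
    (h : ∀ k, ∑ j ∈ univ.erase k, ‖A k j‖ < RCLike.re (A k k)) : A.PosDef := by
  refine hA.posDef_iff_eigenvalues_pos.mpr fun i ↦ ?_
  obtain ⟨k, hk⟩ := eigenvalue_mem_ball (hA.hasEigenvalue_eigenvalues i)
  rw [mem_closedBall_iff_norm'] at hk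
  have := RCLike.re_le_norm (A k k - hA.eigenvalues i)
  simp only [map_sub, RCLike.ofReal_re] at this
  linarith [h k]

theorem posDef_arrowhead {d b c : ℝ} (h : |b| + |c| < d) :
    (!![d, b, c; b, d, 0; c, 0, d] : Matrix (Fin 3) (Fin 3) ℝ).PosDef := by
  refine IsHermitian.posDef_of_sum_row_lt_diag ?_ fun k ↦ ?_
  · ext i j
    fin_cases i <;> fin_cases j <;> rfl
  · fin_cases k <;> simp [Finset.sum_erase_eq_sub, Fin.sum_univ_three] <;>
      linarith [abs_nonneg b, abs_nonneg c]

end Matrix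

theorem euler_LMI_posdef_general
    (a v1 v2 m1 m2 σ : ℝ) (ha : 0 < a) (hσ : 1 < σ)
    (A1 A2 : Matrix (Fin 3) (Fin 3) ℝ)
    (hA1 : A1 = !![v1, a, 0; a, v1, 0; 0, 0, v1])
    (hA2 : A2 = !![v2, 0, a; 0, v2, 0; a, 0, v2])
    (hm : -1 + m1 * v1 + m2 * v2 = σ * (|m1| + |m2|) * a) :
    (-(1 : Matrix (Fin 3) (Fin 3) ℝ) + m1 • A1 + m2 • A2).PosDef := by
  set d := -1 + m1 * v1 + m2 * v2
  have hA : -(1 : Matrix (Fin 3) (Fin 3) ℝ) + m1 • A1 + m2 • A2 =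
      !![d, m1 * a, m2 * a; m1 * a, d, 0; m2 * a, 0, d] := by
    subst hA1 hA2
    ext i j
    fin_cases i <;> fin_cases j <;> simp [d, one_apply]
  have hm_pos : 0 < |m1| + |m2| := by
    refine (add_nonneg (abs_nonneg m1) (abs_nonneg m2)).lt_of_ne' fun h0 ↦ ?_
    obtain ⟨rfl, rfl⟩ : m1 = 0 ∧ m2 = 0 := by
      constructor <;> apply abs_eq_zero.mp <;> linarith [abs_nonneg m1, abs_nonneg m2]
    norm_num [d] at hm
  rw [hA]
  refine posDef_arrowhead ?_
  rw [abs_mul, abs_mul, abs_of_pos ha, hm]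
  linarith [mul_pos (mul_pos (sub_pos.2 hσ) hm_pos) ha]

theorem euler_LMI_posdef
    (a v1 v2 m1 m2 σ : ℝ) (ha : 0 < a) (hv : (v1, v2) ≠ (0, 0)) (hσ : 1 < σ)
    (A1 A2 : Matrix (Fin 3) (Fin 3) ℝ)
    (hA1 : A1 = !![v1, a, 0; a, v1, 0; 0, 0, v1])
    (hA2 : A2 = !![v2, 0, a; 0, v2, 0; a, 0, v2])
    (hm : -1 + m1 * v1 + m2 * v2 = σ * (|m1| + |m2|) * a) :
    (-(1 : Matrix (Fin 3) (Fin 3) ℝ) + m1 • A1 + m2 • A2).PosDef :=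
  euler_LMI_posdef_general a v1 v2 m1 m2 σ ha hσ A1 A2 hA1 hA2 hm
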